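/- Every semilinear subset of ℕᵏ is the Parikh image of a regular language: given finitely many base vectors v₁,...,vₙ ∈ ℕᵏ and for each i period vectors w_i^1,...,w_i^{m_i} ∈ ℕᵏ, there exists a regular language L over a k-letter alphabet such that the Parikh image of L equals { vᵢ + μ₁·w_i^1 + ... + μ_{m_i}·w_i^{m_i} : 1 ≤ i ≤ n, μ₁,...,μ_{m_i} ∈ ℕ }. -/

import Mathlib

/-!
A linear set `v + ℕ w₁ + ⋯ + ℕ wₘ` is the Parikh image of `{v̂} * {ŵ₁, …, ŵₘ}∗`, where `x̂` is any
word with letter counts `x`: a word of this language is `v̂` followed by `μⱼ` copies of each `ŵⱼ`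
in some order. A semilinear set is then the Parikh image of a finite union of such languages.

Regularity comes from the Myhill–Nerode theorem: a left quotient of `l * m`, of `l∗` or of
`⨆ i, l i` is determined by a left quotient of `l` and a set of left quotients of `m`, by a set of
left quotients of `l`, or by one left quotient of each `l i`, so finiteness of the left quotients
is inherited by all three constructions.
-/

open Computability

theorem List.count_flatten_map {α ι : Type*} [BEq α] [Fintype ι] [DecidableEq ι] (js : List ι)
    (W : ι → List α) (a : α) :
    ((js.map W).flatten).count a = ∑ j, js.count j * (W j).count a := by
  rw [List.count_flatten, List.map_map, Finset.sum_list_map_count]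
  refine Finset.sum_subset (Finset.subset_univ _) fun j _ hj => ?_
  simp [List.count_eq_zero_of_not_mem (List.mem_toFinset.not.1 hj)]

noncomputable def wordOfCounts {α : Type*} [Fintype α] (x : α → ℕ) : List α :=
  Finset.univ.toList.flatMap fun a => List.replicate (x a) a

theorem count_wordOfCounts {α : Type*} [Fintype α] [DecidableEq α] (x : α → ℕ) (a : α) :
    (wordOfCounts x).count a = x a := by
  simp [wordOfCounts, List.count_flatMap, List.count_replicate, Function.comp_def,
    Finset.sum_map_toList]

namespace Language

variable {α : Type*}

theorem leftQuotient_iSup {ι : Sort*} (l : ι → Language α) (x : List α) :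
    (⨆ i, l i).leftQuotient x = ⨆ i, (l i).leftQuotient x := by
  ext y
  simp only [mem_leftQuotient, mem_iSup]

theorem leftQuotient_mul (l m : Language α) (x : List α) :
    (l * m).leftQuotient x =
      l.leftQuotient x * m + ⨆ (v : List α) (_ : ∃ u ∈ l, u ++ v = x), m.leftQuotient v := by
  ext y
  simp only [mem_leftQuotient, mem_add, mem_mul, mem_iSup]
  constructor
  · rintro ⟨a, ha, b, hb, hab⟩
    rcases List.append_eq_append_iff.1 hab.symm with ⟨a', rfl, rfl⟩ | ⟨c, rfl, rfl⟩
    · exact .inl ⟨a', ha, b, hb, rfl⟩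
    · exact .inr ⟨c, ⟨a, ha, rfl⟩, hb⟩
  · rintro (⟨a', ha, b, hb, rfl⟩ | ⟨v, ⟨u, hu, rfl⟩, hv⟩)
    · exact ⟨x ++ a', ha, b, hb, List.append_assoc ..⟩
    · exact ⟨u, hu, v ++ y, hv, (List.append_assoc ..).symm⟩

theorem exists_append_eq_of_append_mem_kstar {l : Language α} {x y : List α} (hx : x ≠ [])
    (hxy : x ++ y ∈ l∗) :
    ∃ u ∈ l∗, ∃ v, u ++ v = x ∧ y ∈ l.leftQuotient v * l∗ := by
  obtain ⟨L, hL, hLl⟩ := mem_kstar.1 hxy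
  clear hxy
  induction L generalizing x with
  | nil => exact absurd (List.append_eq_nil_iff.1 hL).1 hx
  | cons c L ih =>
    have hc : c ∈ l := hLl c List.mem_cons_self
    have hL' : ∀ z ∈ L, z ∈ l := fun z hz => hLl z (List.mem_cons_of_mem c hz)
    rcases List.append_eq_append_iff.1 (hL.trans List.flatten_cons) with
      ⟨a, rfl, rfl⟩ | ⟨c', rfl, hy⟩
    · exact ⟨[], nil_mem_kstar l, x, rfl, append_mem_mul hc (join_mem_kstar hL')⟩
    · rcases eq_or_ne c' [] with rfl | hc'
      · refine ⟨[], nil_mem_kstar l, c ++ [], rfl, ?_⟩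
        have hnil : [] ∈ l.leftQuotient (c ++ []) := by simpa using hc
        simpa [hy] using append_mem_mul hnil (join_mem_kstar hL')
      · obtain ⟨u, hu, v, rfl, hv⟩ := ih hc' hy.symm hL'
        exact ⟨c ++ u, mul_kstar_le_kstar (a := l) (append_mem_mul hc hu), v,
          List.append_assoc .., hv⟩

theorem leftQuotient_kstar (l : Language α) {x : List α} (hx : x ≠ []) :
    l∗.leftQuotient x = (⨆ (v : List α) (_ : ∃ u ∈ l∗, u ++ v = x), l.leftQuotient v) * l∗ := by
  ext y
  simp only [iSup_mul, mem_leftQuotient, mem_iSup]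
  constructor
  · intro h
    obtain ⟨u, hu, v, rfl, hv⟩ := exists_append_eq_of_append_mem_kstar hx h
    exact ⟨v, ⟨u, hu, rfl⟩, hv⟩
  · rintro ⟨v, ⟨u, hu, rfl⟩, hv⟩
    obtain ⟨a, ha, b, hb, rfl⟩ := mem_mul.1 hv
    have huva : u ++ (v ++ a) ∈ l∗ := kstar_mul_le_kstar (a := l) (append_mem_mul hu ha)
    have h := append_mem_mul huva hb
    rw [kstar_mul_kstar] at h
    simpa using h

variable {l m : Language α}

theorem isRegular_of_finite (hl : (l : Set (List α)).Finite) : l.IsRegular := by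
  rw [isRegular_iff_finite_range_leftQuotient]
  refine (hl.biUnion fun s _ => s.tails.finite_toSet).powerset.subset ?_
  rintro _ ⟨x, rfl⟩ y hy
  exact Set.mem_biUnion hy ((List.mem_tails _ _).2 (List.suffix_append x y))

theorem isRegular_singleton (u : List α) : ({u} : Language α).IsRegular :=
  isRegular_of_finite (Set.finite_singleton u)

theorem isRegular_iSup {ι : Type*} [Finite ι] {l : ι → Language α} (hl : ∀ i, (l i).IsRegular) :
    (⨆ i, l i).IsRegular := by
  simp only [isRegular_iff_finite_range_leftQuotient] at *
  refine ((Set.Finite.pi hl).image fun q => ⨆ i, q i).subset ?_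
  rintro _ ⟨x, rfl⟩
  exact ⟨fun i => (l i).leftQuotient x, fun i _ => ⟨x, rfl⟩, (leftQuotient_iSup l x).symm⟩

theorem IsRegular.mul (hl : l.IsRegular) (hm : m.IsRegular) : (l * m).IsRegular := by
  rw [isRegular_iff_finite_range_leftQuotient] at *
  refine ((hl.prod hm.powerset).image fun p => p.1 * m + sSup p.2).subset ?_
  rintro _ ⟨x, rfl⟩
  refine ⟨(l.leftQuotient x, m.leftQuotient '' {v | ∃ u ∈ l, u ++ v = x}),
    ⟨⟨x, rfl⟩, Set.image_subset_range _ _⟩, ?_⟩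
  simp only [leftQuotient_mul, sSup_image, Set.mem_ofPred_eq]

theorem IsRegular.kstar (hl : l.IsRegular) : l∗.IsRegular := by
  rw [isRegular_iff_finite_range_leftQuotient] at *
  refine ((hl.powerset.image fun S => sSup S * l∗).insert l∗).subset ?_
  rintro _ ⟨x, rfl⟩
  rcases eq_or_ne x [] with rfl | hx
  · exact Set.mem_insert _ _
  · refine Set.mem_insert_of_mem _ ⟨l.leftQuotient '' {v | ∃ u ∈ l∗, u ++ v = x},
      Set.image_subset_range _ _, ?_⟩
    simp only [leftQuotient_kstar l hx, sSup_image, Set.mem_ofPred_eq]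

theorem mem_kstar_iSup_singleton {ι : Type*} {W : ι → List α} {u : List α} :
    u ∈ (⨆ j, ({W j} : Language α))∗ ↔ ∃ js : List ι, u = (js.map W).flatten := by
  have hmem (y : List α) : y ∈ (⨆ j, ({W j} : Language α)) ↔ y ∈ Set.range W := by
    simp only [mem_iSup, Set.mem_range, eq_comm]
    rfl
  rw [mem_kstar]
  constructor
  · rintro ⟨L, rfl, hL⟩
    obtain ⟨js, rfl⟩ : L ∈ Set.range (List.map W) :=
      (Set.range_list_map W).ge fun y hy => (hmem y).1 (hL y hy)
    exact ⟨js, rfl⟩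
  · rintro ⟨js, rfl⟩
    exact ⟨js.map W, rfl, fun y hy => (hmem y).2 ((Set.range_list_map W).le ⟨js, rfl⟩ y hy)⟩

section Parikh

variable [DecidableEq α]

def parikhImage (L : Language α) : Set (α → ℕ) :=
  {x | ∃ u ∈ L, x = fun a => u.count a}

theorem parikhImage_iSup {ι : Sort*} (L : ι → Language α) :
    parikhImage (⨆ i, L i) = ⋃ i, parikhImage (L i) := by
  ext x
  simp only [parikhImage, mem_iSup, Set.mem_iUnion, Set.mem_ofPred_eq]
  exact ⟨fun ⟨u, ⟨i, hu⟩, hx⟩ => ⟨i, u, hu, hx⟩, fun ⟨i, u, hu, hx⟩ => ⟨u, ⟨i, hu⟩, hx⟩⟩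

theorem parikhImage_singleton_mul_kstar {ι : Type*} [Fintype ι] (V : List α) (W : ι → List α) :
    parikhImage ({V} * (⨆ j, ({W j} : Language α))∗) =
      {x | ∃ μ : ι → ℕ, x = (fun a => V.count a) + ∑ j, μ j • fun a => (W j).count a} := by
  classical
  have hcount (js : List ι) : (fun a => (V ++ (js.map W).flatten).count a) =
      (fun a => V.count a) + ∑ j, js.count j • fun a => (W j).count a := by
    funext a
    simp [List.count_flatten_map]
  ext x
  simp only [parikhImage, Set.mem_ofPred_eq, mem_mul, mem_kstar_iSup_singleton]
  constructor
  · rintro ⟨_, ⟨_, rfl, _, ⟨js, rfl⟩, rfl⟩, rfl⟩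
    exact ⟨fun j => js.count j, hcount js⟩
  · rintro ⟨μ, rfl⟩
    refine ⟨_, ⟨V, rfl, _, ⟨wordOfCounts μ, rfl⟩, rfl⟩, ?_⟩
    simp only [hcount, count_wordOfCounts]

end Parikh

end Language

open Language

/-- Every semilinear subset of ℕᵏ is the Parikh image of a regular
language: given base vectors `v i` and period vectors `w i j`, there is a regular
language `L` over a `k`-letter alphabet whose Parikh image (letter counts of its words)
is exactly the semilinear set `⋃ i, v i + ℕ·w i 1 + ... + ℕ·w i (m i)`. -/
theorem semilinear_is_parikh_of_regular (k n : ℕ) (v : Fin n → Fin k → ℕ)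
    (m : Fin n → ℕ) (w : (i : Fin n) → Fin (m i) → Fin k → ℕ) :
    ∃ L : Language (Fin k), L.IsRegular ∧
      {x : Fin k → ℕ | ∃ u ∈ L, x = fun a => u.count a} =
      {x : Fin k → ℕ | ∃ (i : Fin n) (μ : Fin (m i) → ℕ),
        x = v i + ∑ j, μ j • w i j} := by
  refine ⟨⨆ i, {wordOfCounts (v i)} * (⨆ j, {wordOfCounts (w i j)})∗,
    isRegular_iSup fun i => (isRegular_singleton _).mul
      (isRegular_iSup fun j => isRegular_singleton _).kstar, ?_⟩
  change parikhImage _ = _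
  ext x
  simp only [parikhImage_iSup, parikhImage_singleton_mul_kstar, count_wordOfCounts,
    Set.mem_iUnion, Set.mem_ofPred_eq]
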